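/- Rational kernel identity: For any x, x' ∈ ℝ^d with ‖x‖ ≤ 1 and ‖x'‖ ≤ 1, the family (φ(x)_α · φ(x')_α) indexed by multi-indices α ∈ ℕ^d is summable, φ(x) and φ(x') belong to ℓ², and ⟨φ(x), φ(x')⟩_{ℓ²} = 1/(1 − (1/2)⟨x, x'⟩). In particular, ‖φ(x)‖²_{ℓ²} = 1/(1 − (1/2)‖x‖²) ≤ 2. -/

import Mathlib

/-!
Writing `y i = x i * x' i / 2`, the product `φ(x)_α φ(x')_α` is the multinomial term
`(|α| choose α) ∏ yᵢ^αᵢ`. Grouping multi-indices by their total degree `n` turns the series into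
the geometric series `∑ₙ (∑ᵢ yᵢ)ⁿ = (1 - ⟪x, x'⟫/2)⁻¹`; absolute convergence comes from the same
computation for `|yᵢ|`, since `∑ᵢ |yᵢ| ≤ ‖x‖ ‖x'‖ / 2 < 1` by Cauchy–Schwarz.
-/

open scoped RealInnerProductSpace
open Finset

/-- The feature map associated with the rational kernel: the coordinate of `φ(x)` at the
multi-index `α` is `x^α · sqrt(2^{-|α|} · |α|!/(α₁!⋯α_d!))`. -/
noncomputable def phiMap (d : ℕ) (x : EuclideanSpace ℝ (Fin d)) (α : Fin d →₀ ℕ) : ℝ :=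
  (∏ i, x i ^ α i) *
    Real.sqrt (((2 : ℝ) ^ (∑ i, α i))⁻¹ * (Nat.multinomial Finset.univ α : ℝ))

section Multinomial

variable {ι : Type*} [Fintype ι]

theorem preimage_sum_singleton_eq_piAntidiag [DecidableEq ι] (n : ℕ) :
    (fun a : ι → ℕ => ∑ i, a i) ⁻¹' {n} = ↑((univ : Finset ι).piAntidiag n) := by
  ext a
  simp [mem_piAntidiag]

theorem tsum_multinomial_mul_prod_pow_fiber (z : ι → ℝ) (n : ℕ) :
    ∑' a : (fun a : ι → ℕ => ∑ i, a i) ⁻¹' {n},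
      (Nat.multinomial univ (a : ι → ℕ) : ℝ) * ∏ i, z i ^ (a : ι → ℕ) i = (∑ i, z i) ^ n := by
  classical
  rw [preimage_sum_singleton_eq_piAntidiag,
    Finset.tsum_subtype' (f := fun a : ι → ℕ => (Nat.multinomial univ a : ℝ) * ∏ i, z i ^ a i),
    sum_pow_eq_sum_piAntidiag]

theorem hasSum_multinomial_mul_prod_pow (y : ι → ℝ) (hy : ∑ i, |y i| < 1) :
    HasSum (fun a : ι → ℕ => (Nat.multinomial univ a : ℝ) * ∏ i, y i ^ a i)
      (1 - ∑ i, y i)⁻¹ := by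
  classical
  set deg := fun a : ι → ℕ => ∑ i, a i
  have hfin (n : ℕ) : Finite {a // deg a = n} := by
    change Finite (deg ⁻¹' {n})
    rw [preimage_sum_singleton_eq_piAntidiag]
    infer_instance
  have habs : Summable fun a : ι → ℕ => (Nat.multinomial univ a : ℝ) * ∏ i, |y i| ^ a i := by
    rw [← (Equiv.sigmaFiberEquiv deg).summable_iff,
      summable_sigma_of_nonneg fun _ => by simp only [Function.comp_apply]; positivity]
    refine ⟨fun n => .of_finite, ?_⟩
    exact (summable_geometric_of_lt_one (by positivity) hy).congr fun n =>
      (tsum_multinomial_mul_prod_pow_fiber _ n).symm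
  have hs : Summable fun a : ι → ℕ => (Nat.multinomial univ a : ℝ) * ∏ i, y i ^ a i :=
    .of_abs <| habs.congr fun a => by simp [abs_mul, abs_prod, abs_pow]
  have hgeom : HasSum (fun n => (∑ i, y i) ^ n) (1 - ∑ i, y i)⁻¹ :=
    hasSum_geometric_of_abs_lt_one ((abs_sum_le_sum_abs _ _).trans_lt hy)
  have htsum := (hs.hasSum.tsum_fiberwise deg).unique
    (hgeom.congr_fun fun n => tsum_multinomial_mul_prod_pow_fiber y n)
  exact htsum ▸ hs.hasSum

end Multinomial

section EuclideanSpace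

variable {ι : Type*} [Fintype ι]

theorem EuclideanSpace.sum_abs_mul_abs_le_norm_mul_norm (x y : EuclideanSpace ℝ ι) :
    ∑ i, |x i| * |y i| ≤ ‖x‖ * ‖y‖ := by
  simpa [EuclideanSpace.norm_eq] using Real.sum_mul_le_sqrt_mul_sqrt univ (|x ·|) (|y ·|)

theorem EuclideanSpace.real_inner_eq_sum (x y : EuclideanSpace ℝ ι) :
    ⟪x, y⟫ = ∑ i, x i * y i := by
  simp [PiLp.inner_apply, mul_comm]

end EuclideanSpace

section PhiMap

variable {d : ℕ}

theorem phiMap_mul_phiMap (x x' : EuclideanSpace ℝ (Fin d)) (α : Fin d →₀ ℕ) :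
    phiMap d x α * phiMap d x' α =
      (Nat.multinomial univ α : ℝ) * ∏ i, (x i * x' i / 2) ^ α i := by
  have hprod : ∏ i, (x i * x' i / 2) ^ α i =
      (∏ i, x i ^ α i) * (∏ i, x' i ^ α i) * ((2 : ℝ) ^ ∑ i, α i)⁻¹ := by
    simp only [div_eq_mul_inv, mul_pow, prod_mul_distrib, inv_pow, prod_inv_distrib,
      prod_pow_eq_pow_sum]
  rw [phiMap, phiMap, hprod, mul_mul_mul_comm, Real.mul_self_sqrt (by positivity)]
  ring

theorem hasSum_phiMap_mul_phiMap {x x' : EuclideanSpace ℝ (Fin d)} (h : ‖x‖ * ‖x'‖ < 2) :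
    HasSum (fun α => phiMap d x α * phiMap d x' α) (1 - ⟪x, x'⟫ / 2)⁻¹ := by
  have hy : ∑ i, |x i * x' i / 2| < 1 := by
    simp only [abs_div, abs_mul, abs_two, ← sum_div]
    linarith [EuclideanSpace.sum_abs_mul_abs_le_norm_mul_norm x x']
  have hsum := hasSum_multinomial_mul_prod_pow _ hy
  rw [← Finsupp.equivFunOnFinite.hasSum_iff, ← sum_div,
    ← EuclideanSpace.real_inner_eq_sum] at hsum
  exact hsum.congr_fun fun α => phiMap_mul_phiMap x x' α

theorem memℓp_phiMap {x : EuclideanSpace ℝ (Fin d)} (hx : ‖x‖ * ‖x‖ < 2) :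
    Memℓp (phiMap d x) 2 := by
  refine memℓp_gen ((hasSum_phiMap_mul_phiMap hx).summable.congr fun α => ?_)
  rw [ENNReal.toReal_ofNat, Real.rpow_two, Real.norm_eq_abs, sq_abs, sq]

theorem inner_phiMap {x x' : EuclideanSpace ℝ (Fin d)} (hx : Memℓp (phiMap d x) 2)
    (hx' : Memℓp (phiMap d x') 2) (h : ‖x‖ * ‖x'‖ < 2) :
    ⟪(⟨phiMap d x, hx⟩ : lp (fun _ : Fin d →₀ ℕ => ℝ) 2), ⟨phiMap d x', hx'⟩⟫ =
      (1 - ⟪x, x'⟫ / 2)⁻¹ := by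
  rw [lp.inner_eq_tsum, ← (hasSum_phiMap_mul_phiMap h).tsum_eq]
  exact tsum_congr fun α => by simp [mul_comm]

end PhiMap

/-- Rational kernel identity: for `‖x‖ ≤ 1` and `‖x'‖ ≤ 1`, the family
`(φ(x)_α · φ(x')_α)` is summable, `φ(x), φ(x') ∈ ℓ²`, and
`⟪φ(x), φ(x')⟫ = 1/(1 − ⟪x,x'⟫/2)`; in particular
`‖φ(x)‖² = 1/(1 − ‖x‖²/2) ≤ 2`. -/
theorem rational_kernel_identity (d : ℕ) (x x' : EuclideanSpace ℝ (Fin d))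
    (hx : ‖x‖ ≤ 1) (hx' : ‖x'‖ ≤ 1) :
    ∃ (h1 : Memℓp (phiMap d x) 2) (h2 : Memℓp (phiMap d x') 2),
      Summable (fun α : Fin d →₀ ℕ => phiMap d x α * phiMap d x' α) ∧
      ⟪(⟨phiMap d x, h1⟩ : lp (fun _ : Fin d →₀ ℕ => ℝ) 2),
        (⟨phiMap d x', h2⟩ : lp (fun _ : Fin d →₀ ℕ => ℝ) 2)⟫ =
        1 / (1 - ⟪x, x'⟫ / 2) ∧
      ‖(⟨phiMap d x, h1⟩ : lp (fun _ : Fin d →₀ ℕ => ℝ) 2)‖ ^ 2 =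
        1 / (1 - ‖x‖ ^ 2 / 2) ∧
      ‖(⟨phiMap d x, h1⟩ : lp (fun _ : Fin d →₀ ℕ => ℝ) 2)‖ ^ 2 ≤ 2 := by
  have hlt {u v : EuclideanSpace ℝ (Fin d)} (hu : ‖u‖ ≤ 1) (hv : ‖v‖ ≤ 1) : ‖u‖ * ‖v‖ < 2 :=
    (mul_le_one₀ hu (norm_nonneg _) hv).trans_lt one_lt_two
  have h1 : Memℓp (phiMap d x) 2 := memℓp_phiMap (hlt hx hx)
  have h2 : Memℓp (phiMap d x') 2 := memℓp_phiMap (hlt hx' hx')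
  have hnorm : ‖(⟨phiMap d x, h1⟩ : lp (fun _ : Fin d →₀ ℕ => ℝ) 2)‖ ^ 2 =
      1 / (1 - ‖x‖ ^ 2 / 2) := by
    rw [← real_inner_self_eq_norm_sq, inner_phiMap h1 h1 (hlt hx hx), real_inner_self_eq_norm_sq,
      one_div]
  refine ⟨h1, h2, (hasSum_phiMap_mul_phiMap (hlt hx hx')).summable,
    by rw [inner_phiMap h1 h2 (hlt hx hx'), one_div], hnorm, ?_⟩
  have hx2 : ‖x‖ ^ 2 ≤ 1 := pow_le_one₀ (norm_nonneg x) hx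
  rw [hnorm, div_le_iff₀ (by linarith)]
  linarith
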